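/- Let n, m be integers whose greatest common divisor k satisfies |k| ≥ 2. Then the group ⟨a, b | (ab)^n = (ba)^m⟩ contains a non-abelian free subgroup. -/

import Mathlib

/-- Relation `(ab)^n = (ba)^m`, generators `a = of 0`, `b = of 1`. -/
def relsStmt5 (n m : ℤ) : Set (FreeGroup (Fin 2)) :=
  let a := FreeGroup.of (0 : Fin 2)
  let b := FreeGroup.of (1 : Fin 2)
  {(a * b) ^ n * ((b * a) ^ m)⁻¹}

/-! With `x = ab` and `y = b` the relation reads `x ^ n = y x ^ m y⁻¹`. Killing `x ^ k` for
`k = gcd(n, m)` maps the group onto `ℤ/k * ℤ ≅ F(ℤ/k) ⋊ ℤ/k`, where `y` and its conjugate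
`x y x⁻¹` become two distinct free generators `0` and `1` of `F(ℤ/k)`. So `b` and `(ab) b (ab)⁻¹`
generate a free subgroup of rank two. -/

section PresentedGroup

variable {G : Type*} [Group G] {n m : ℤ}

def relsStmt5.toGroup (x y : G) (h : x ^ n = y * x ^ m * y⁻¹) :
    PresentedGroup (relsStmt5 n m) →* G :=
  PresentedGroup.toGroup (f := ![x * y⁻¹, y]) <| by
    rintro r rfl
    simp only [FreeGroup.lift_apply_of, map_mul, map_zpow, map_inv, Matrix.cons_val_zero,
      Matrix.cons_val_one, inv_mul_cancel_right]
    rw [show y * (x * y⁻¹) = y * x * y⁻¹ by group, conj_zpow, h, mul_inv_cancel]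

variable (n m) in
def relsStmt5.freeSubgroupLift : FreeGroup (Fin 2) →* PresentedGroup (relsStmt5 n m) :=
  let a := PresentedGroup.of 0
  let b := PresentedGroup.of 1
  FreeGroup.lift ![b, a * b * b * (a * b)⁻¹]

theorem relsStmt5.toGroup_comp_freeSubgroupLift (x y : G) (h : x ^ n = y * x ^ m * y⁻¹) :
    (relsStmt5.toGroup x y h).comp (relsStmt5.freeSubgroupLift n m) =
      FreeGroup.lift ![y, x * y * x⁻¹] := by
  ext i
  fin_cases i <;> simp [relsStmt5.toGroup, relsStmt5.freeSubgroupLift, PresentedGroup.toGroup.of,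
    mul_assoc]

end PresentedGroup

section Shift

variable (A : Type*) [AddGroup A]

def FreeGroup.shiftAut : Multiplicative A →* MulAut (FreeGroup A) :=
  MonoidHom.mk' (fun c => FreeGroup.freeGroupCongr (Equiv.addLeft c.toAdd)) fun c d => by
    apply MulEquiv.toMonoidHom_injective
    ext a
    simp [add_assoc]

variable {A}

theorem FreeGroup.shiftAut_conj (c a : A) :
    (SemidirectProduct.inr (Multiplicative.ofAdd c) * SemidirectProduct.inl (FreeGroup.of a) *
        (SemidirectProduct.inr (Multiplicative.ofAdd c))⁻¹ :
      FreeGroup A ⋊[FreeGroup.shiftAut A] Multiplicative A) =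
      SemidirectProduct.inl (FreeGroup.of (c + a)) := by
  rw [← _root_.map_inv, ← SemidirectProduct.inl_aut]
  simp [FreeGroup.shiftAut]

end Shift

theorem FreeGroup.lift_pair_injective {α H : Type*} [Group H] {g : FreeGroup α →* H}
    (hg : Function.Injective g) {a b : α} (hab : a ≠ b) :
    Function.Injective (FreeGroup.lift ![g (FreeGroup.of a), g (FreeGroup.of b)]) := by
  have : FreeGroup.lift ![g (FreeGroup.of a), g (FreeGroup.of b)] =
      g.comp (FreeGroup.map ![a, b]) := by
    ext i
    fin_cases i <;> simp
  rw [this]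
  exact hg.comp (FreeGroup.map_injective (injective_pair_iff_ne.2 hab))

theorem ZMod.ofAdd_one_zpow_eq_one {k : ℕ} {j : ℤ} (hj : (k : ℤ) ∣ j) :
    Multiplicative.ofAdd (1 : ZMod k) ^ j = 1 := by
  rw [← ofAdd_zsmul, zsmul_one, (ZMod.intCast_zmod_eq_zero_iff_dvd j k).2 hj, ofAdd_zero]

/-- If `gcd(n, m) ≥ 2`, then `⟨a, b | (ab)^n = (ba)^m⟩` contains a non-abelian
free subgroup (i.e. the free group of rank 2 embeds into it). -/
theorem stmt_5 (n m : ℤ) (h : 2 ≤ Int.gcd n m) :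
    ∃ f : FreeGroup (Fin 2) →* PresentedGroup (relsStmt5 n m), Function.Injective f := by
  set k := Int.gcd n m
  have : Fact (1 < k) := ⟨h⟩
  let x : FreeGroup (ZMod k) ⋊[FreeGroup.shiftAut (ZMod k)] Multiplicative (ZMod k) :=
    SemidirectProduct.inr (Multiplicative.ofAdd 1)
  let y : FreeGroup (ZMod k) ⋊[FreeGroup.shiftAut (ZMod k)] Multiplicative (ZMod k) :=
    SemidirectProduct.inl (FreeGroup.of 0)
  have hx : ∀ j : ℤ, (k : ℤ) ∣ j → x ^ j = 1 := fun j hj => by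
    rw [← map_zpow, ZMod.ofAdd_one_zpow_eq_one hj, map_one]
  have hrel : x ^ n = y * x ^ m * y⁻¹ := by
    rw [hx n (Int.gcd_dvd_left n m), hx m (Int.gcd_dvd_right n m), mul_one, mul_inv_cancel]
  refine ⟨relsStmt5.freeSubgroupLift n m, .of_comp (f := relsStmt5.toGroup x y hrel) ?_⟩
  rw [← MonoidHom.coe_comp, relsStmt5.toGroup_comp_freeSubgroupLift, FreeGroup.shiftAut_conj,
    add_zero]
  exact FreeGroup.lift_pair_injective SemidirectProduct.inl_injective zero_ne_one
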